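/- arXiv:2504.16401 — 2 statements merged into one kernel-verified Lean document; each statement's English description precedes it below -/
import Mathlib

section
/- Let u : ℝ³ → ℝ³ be a smooth compactly supported divergence-free vector field (∂₁u₁ + ∂₂u₂ + ∂₃u₃ = 0). Then for every multi-index of the form ∇^k applied to (∂_x, ∂_z)∂_x u, one has ‖∇^k (∂_x,∂_z) ∂_x u‖_{L²} ≤ C (‖∇^k (∂_x² + ∂_z²) u₃‖_{L²} + ‖∇^k Δ u₂‖_{L²}) for a universal constant C (for k = 0). -/
open MeasureTheory ContDiff

/-- Directional partial derivative in direction `v`. -/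
noncomputable def pd3 (v : ℝ × ℝ × ℝ) (f : ℝ × ℝ × ℝ → ℝ) (p : ℝ × ℝ × ℝ) : ℝ :=
  fderiv ℝ f p v

/-- Unit coordinate vectors `e_x, e_y, e_z` in `ℝ³`. -/
def eX : ℝ × ℝ × ℝ := (1, 0, 0)
def eY : ℝ × ℝ × ℝ := (0, 1, 0)
def eZ : ℝ × ℝ × ℝ := (0, 0, 1)

/-- The Laplacian. -/
noncomputable def lap3 (f : ℝ × ℝ × ℝ → ℝ) (p : ℝ × ℝ × ℝ) : ℝ :=
  pd3 eX (pd3 eX f) p + pd3 eY (pd3 eY f) p + pd3 eZ (pd3 eZ f) p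

variable {f g : ℝ × ℝ × ℝ → ℝ}


lemma pd3_smooth (hf : ContDiff ℝ ∞ f) (v : ℝ × ℝ × ℝ) : ContDiff ℝ ∞ (pd3 v f) := by
  have h := (contDiff_infty_iff_fderiv.mp hf).2
  exact ((ContinuousLinearMap.apply ℝ ℝ v).contDiff).comp h

lemma pd3_cs (hf : HasCompactSupport f) (v : ℝ × ℝ × ℝ) : HasCompactSupport (pd3 v f) := by
  have h := hf.fderiv ℝ
  exact h.comp_left (g := fun L : (ℝ × ℝ × ℝ) →L[ℝ] ℝ => L v) (by simp)

lemma pd3_comm (hf : ContDiff ℝ ∞ f) (a b : ℝ × ℝ × ℝ) :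
    pd3 a (pd3 b f) = pd3 b (pd3 a f) := by
  funext p
  have hsymm : IsSymmSndFDerivAt ℝ f p :=
    (hf.contDiffAt).isSymmSndFDerivAt (by rw [minSmoothness_of_isRCLikeNormedField]; exact WithTop.coe_le_coe.mpr le_top)
  have hfd : Differentiable ℝ (fderiv ℝ f) :=
    ((contDiff_infty_iff_fderiv.mp hf).2).differentiable (by norm_num)
  have key : ∀ v w : ℝ × ℝ × ℝ, pd3 w (pd3 v f) p = fderiv ℝ (fderiv ℝ f) p w v := by
    intro v w
    have : pd3 v f = fun q => (fderiv ℝ f q) ((fun _ : ℝ × ℝ × ℝ => v) q) := rfl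
    rw [pd3, this, fderiv_clm_apply (hfd p) (differentiableAt_const v)]
    simp
  rw [key b a, key a b, hsymm.eq]

lemma slice_cs_snd {α β : Type*} [TopologicalSpace α] [TopologicalSpace β] [T2Space α] [T2Space β]
    {F : α × β → ℝ} (hc : HasCompactSupport F) (x : α) :
    HasCompactSupport (fun y : β => F (x, y)) := by
  apply HasCompactSupport.intro (hc.image continuous_snd)
  intro y hy
  by_contra h
  exact hy ⟨(x, y), subset_closure (Function.mem_support.mpr h), rfl⟩

lemma slice_cs_fst {α β : Type*} [TopologicalSpace α] [TopologicalSpace β] [T2Space α] [T2Space β]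
    {F : α × β → ℝ} (hc : HasCompactSupport F) (y : β) :
    HasCompactSupport (fun x : α => F (x, y)) := by
  apply HasCompactSupport.intro (hc.image continuous_fst)
  intro x hx
  by_contra h
  exact hx ⟨(x, y), subset_closure (Function.mem_support.mpr h), rfl⟩

lemma integral_deriv_zero1 {h : ℝ → ℝ} (hh : ContDiff ℝ 1 h) (hc : HasCompactSupport h) :
    ∫ x, deriv h x = 0 := by
  have hd : Continuous (deriv h) := hh.continuous_deriv le_rfl
  have hi : Integrable (deriv h) := hd.integrable_of_hasCompactSupport (hc.deriv)
  rw [← intervalIntegral.integral_Iic_add_Ioi (b := 0) hi.integrableOn hi.integrableOn,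
    hc.integral_Iic_deriv_eq hh 0, hc.integral_Ioi_deriv_eq hh 0]
  ring

lemma one_le_inf : (1 : WithTop ℕ∞) ≤ ∞ := WithTop.coe_le_coe.mpr le_top

lemma integral_pd3_eX_zero (hf : ContDiff ℝ ∞ f) (hc : HasCompactSupport f) :
    ∫ p, pd3 eX f p = 0 := by
  have hcont : Continuous (pd3 eX f) := (pd3_smooth hf eX).continuous
  have hi : Integrable (pd3 eX f) := hcont.integrable_of_hasCompactSupport (pd3_cs hc eX)
  rw [Measure.volume_eq_prod _ _] at hi ⊢
  rw [integral_prod_symm _ hi]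
  have inner : ∀ yz : ℝ × ℝ, ∫ x, pd3 eX f (x, yz) = 0 := by
    intro yz
    have hg : ContDiff ℝ 1 (fun t : ℝ => f (t, yz)) :=
      (hf.comp (contDiff_id.prodMk contDiff_const)).of_le one_le_inf
    have hgc : HasCompactSupport (fun t : ℝ => f (t, yz)) := slice_cs_fst hc yz
    have hd : ∀ x : ℝ, HasDerivAt (fun t : ℝ => f (t, yz)) (pd3 eX f (x, yz)) x := by
      intro x
      exact ((hf.differentiable (by simp)) (x, yz)).hasFDerivAt.comp_hasDerivAt x
        (HasDerivAt.prodMk (hasDerivAt_id x) (hasDerivAt_const x yz))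
    have : (fun x : ℝ => pd3 eX f (x, yz)) = deriv (fun t : ℝ => f (t, yz)) :=
      funext fun x => ((hd x).deriv).symm
    rw [this]
    exact integral_deriv_zero1 hg hgc
  simp [inner]

lemma integral_pd3_eZ_zero (hf : ContDiff ℝ ∞ f) (hc : HasCompactSupport f) :
    ∫ p, pd3 eZ f p = 0 := by
  have hcont : Continuous (pd3 eZ f) := (pd3_smooth hf eZ).continuous
  have hics : HasCompactSupport (pd3 eZ f) := pd3_cs hc eZ
  have hi : Integrable (pd3 eZ f) := hcont.integrable_of_hasCompactSupport hics
  rw [Measure.volume_eq_prod _ _] at hi ⊢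
  rw [integral_prod _ hi]
  have inner : ∀ x : ℝ, ∫ yz : ℝ × ℝ, pd3 eZ f (x, yz) = 0 := by
    intro x
    have hcont2 : Continuous (fun yz : ℝ × ℝ => pd3 eZ f (x, yz)) :=
      hcont.comp (Continuous.prodMk_right x)
    have hics2 : HasCompactSupport (fun yz : ℝ × ℝ => pd3 eZ f (x, yz)) :=
      slice_cs_snd hics x
    have hi2 : Integrable (fun yz : ℝ × ℝ => pd3 eZ f (x, yz)) :=
      hcont2.integrable_of_hasCompactSupport hics2
    rw [Measure.volume_eq_prod _ _] at hi2 ⊢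
    rw [integral_prod _ hi2]
    have inner2 : ∀ y : ℝ, ∫ z, pd3 eZ f (x, y, z) = 0 := by
      intro y
      have hg : ContDiff ℝ 1 (fun t : ℝ => f (x, y, t)) :=
        (hf.comp (contDiff_const.prodMk (contDiff_const.prodMk contDiff_id))).of_le one_le_inf
      have hgc : HasCompactSupport (fun t : ℝ => f (x, y, t)) :=
        slice_cs_snd (slice_cs_snd hc x) y
      have hd : ∀ z : ℝ, HasDerivAt (fun t : ℝ => f (x, y, t)) (pd3 eZ f (x, y, z)) z := fun z =>
        ((hf.differentiable (by simp)) (x, y, z)).hasFDerivAt.comp_hasDerivAt z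
          (HasDerivAt.prodMk (hasDerivAt_const z x) (HasDerivAt.prodMk (hasDerivAt_const z y) (hasDerivAt_id z)))
      have : (fun z : ℝ => pd3 eZ f (x, y, z)) = deriv (fun t : ℝ => f (x, y, t)) :=
        funext fun z => ((hd z).deriv).symm
      rw [this]
      exact integral_deriv_zero1 hg hgc
    simp [inner2]
  simp [inner]

lemma integral_pd3_eY_zero (hf : ContDiff ℝ ∞ f) (hc : HasCompactSupport f) :
    ∫ p, pd3 eY f p = 0 := by
  have hcont : Continuous (pd3 eY f) := (pd3_smooth hf eY).continuous
  have hics : HasCompactSupport (pd3 eY f) := pd3_cs hc eY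
  have hi : Integrable (pd3 eY f) := hcont.integrable_of_hasCompactSupport hics
  rw [Measure.volume_eq_prod _ _] at hi ⊢
  rw [integral_prod _ hi]
  have inner : ∀ x : ℝ, ∫ yz : ℝ × ℝ, pd3 eY f (x, yz) = 0 := by
    intro x
    have hcont2 : Continuous (fun yz : ℝ × ℝ => pd3 eY f (x, yz)) :=
      hcont.comp (Continuous.prodMk_right x)
    have hics2 : HasCompactSupport (fun yz : ℝ × ℝ => pd3 eY f (x, yz)) :=
      slice_cs_snd hics x
    have hi2 : Integrable (fun yz : ℝ × ℝ => pd3 eY f (x, yz)) :=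
      hcont2.integrable_of_hasCompactSupport hics2
    rw [Measure.volume_eq_prod _ _] at hi2 ⊢
    rw [integral_prod_symm _ hi2]
    have inner2 : ∀ z : ℝ, ∫ y, pd3 eY f (x, y, z) = 0 := by
      intro z
      have hg : ContDiff ℝ 1 (fun t : ℝ => f (x, t, z)) :=
        (hf.comp (contDiff_const.prodMk (contDiff_id.prodMk contDiff_const))).of_le one_le_inf
      have hgc : HasCompactSupport (fun t : ℝ => f (x, t, z)) :=
        slice_cs_fst (slice_cs_snd hc x) z
      have hd : ∀ y : ℝ, HasDerivAt (fun t : ℝ => f (x, t, z)) (pd3 eY f (x, y, z)) y := fun y =>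
        ((hf.differentiable (by simp)) (x, y, z)).hasFDerivAt.comp_hasDerivAt y
          (HasDerivAt.prodMk (hasDerivAt_const y x) (HasDerivAt.prodMk (hasDerivAt_id y) (hasDerivAt_const y z)))
      have : (fun y : ℝ => pd3 eY f (x, y, z)) = deriv (fun t : ℝ => f (x, t, z)) :=
        funext fun y => ((hd y).deriv).symm
      rw [this]
      exact integral_deriv_zero1 hg hgc
    simp [inner2]
  simp [inner]

/-- Integration by parts: for `v` a coordinate vector. -/
lemma ibp (hf : ContDiff ℝ ∞ f) (hcf : HasCompactSupport f)
    (hg : ContDiff ℝ ∞ g) (hcg : HasCompactSupport g)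
    {v : ℝ × ℝ × ℝ} (hv : v = eX ∨ v = eY ∨ v = eZ) :
    ∫ p, pd3 v f p * g p = - ∫ p, f p * pd3 v g p := by
  have hfg : ContDiff ℝ ∞ (f * g) := hf.mul hg
  have hcfg : HasCompactSupport (f * g) := hcf.mul_right
  have hzero : ∫ p, pd3 v (f * g) p = 0 := by
    rcases hv with rfl | rfl | rfl
    · exact integral_pd3_eX_zero hfg hcfg
    · exact integral_pd3_eY_zero hfg hcfg
    · exact integral_pd3_eZ_zero hfg hcfg
  have hprod : ∀ p, pd3 v (f * g) p = pd3 v f p * g p + f p * pd3 v g p := by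
    intro p
    simp only [pd3]
    have : f * g = fun y => f y * g y := rfl
    rw [this, fderiv_fun_mul ((hf.differentiable (by simp)) p) ((hg.differentiable (by simp)) p)]
    simp only [ContinuousLinearMap.add_apply, ContinuousLinearMap.smul_apply, smul_eq_mul]
    ring
  rw [funext hprod] at hzero
  have hif : Integrable (fun p => pd3 v f p * g p) :=
    (((pd3_smooth hf v).continuous).mul hg.continuous).integrable_of_hasCompactSupport
      ((pd3_cs hcf v).mul_right)
  have hig : Integrable (fun p => f p * pd3 v g p) :=
    (hf.continuous.mul ((pd3_smooth hg v).continuous)).integrable_of_hasCompactSupport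
      ((pd3_cs hcg v).mul_left)
  rw [integral_add hif hig] at hzero
  linarith

def IsCoord (v : ℝ × ℝ × ℝ) : Prop := v = eX ∨ v = eY ∨ v = eZ

lemma integrable_mul_cs {F G : ℝ × ℝ × ℝ → ℝ} (hF : Continuous F) (hG : Continuous G)
    (h : HasCompactSupport F) : Integrable (fun p => F p * G p) :=
  (hF.mul hG).integrable_of_hasCompactSupport (h.mul_right)

/-- `∫ (∂a ∂b f)² = ∫ (∂a∂a f)(∂b∂b f)`. -/
lemma int_sq_swap (hf : ContDiff ℝ ∞ f) (hc : HasCompactSupport f)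
    {a b : ℝ × ℝ × ℝ} (ha : IsCoord a) (hb : IsCoord b) :
    ∫ p, (pd3 a (pd3 b f) p) ^ 2 = ∫ p, pd3 a (pd3 a f) p * pd3 b (pd3 b f) p := by
  set F := pd3 b f with hF
  set G := pd3 a f with hG
  have hFs : ContDiff ℝ ∞ F := pd3_smooth hf b
  have hFc : HasCompactSupport F := pd3_cs hc b
  have hGs : ContDiff ℝ ∞ G := pd3_smooth hf a
  have hGc : HasCompactSupport G := pd3_cs hc a
  have haFs : ContDiff ℝ ∞ (pd3 a F) := pd3_smooth hFs a
  have haFc : HasCompactSupport (pd3 a F) := pd3_cs hFc a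
  have haGs : ContDiff ℝ ∞ (pd3 a G) := pd3_smooth hGs a
  have haGc : HasCompactSupport (pd3 a G) := pd3_cs hGc a
  have step1 : ∫ p, (pd3 a F p) ^ 2 = - ∫ p, F p * pd3 a (pd3 a F) p := by
    simp_rw [pow_two]
    exact ibp hFs hFc haFs haFc ha
  have comm1 : pd3 a F = pd3 b G := pd3_comm hf a b
  have comm2 : pd3 a (pd3 b G) = pd3 b (pd3 a G) := pd3_comm hGs a b
  have step2 : pd3 a (pd3 a F) = pd3 b (pd3 a G) := by rw [comm1, comm2]
  have step3 : ∫ p, pd3 b F p * pd3 a G p = - ∫ p, F p * pd3 b (pd3 a G) p :=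
    ibp hFs hFc haGs haGc hb
  rw [step1, step2, ← step3]
  congr 1
  funext p
  rw [hF, hG, mul_comm]

/-- `∫(Δf)²` expands as a sum of squares of all second partials. -/
lemma int_sq_lap (hf : ContDiff ℝ ∞ f) (hc : HasCompactSupport f) :
    ∫ p, (lap3 f p) ^ 2 =
      (∫ p, (pd3 eX (pd3 eX f) p) ^ 2) + (∫ p, (pd3 eY (pd3 eY f) p) ^ 2)
        + (∫ p, (pd3 eZ (pd3 eZ f) p) ^ 2)
        + 2 * (∫ p, (pd3 eX (pd3 eY f) p) ^ 2)
        + 2 * (∫ p, (pd3 eX (pd3 eZ f) p) ^ 2)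
        + 2 * (∫ p, (pd3 eY (pd3 eZ f) p) ^ 2) := by
  have sm : ∀ v w : ℝ × ℝ × ℝ, Continuous (pd3 v (pd3 w f)) := fun v w =>
    (pd3_smooth (pd3_smooth hf w) v).continuous
  have cs : ∀ v w : ℝ × ℝ × ℝ, HasCompactSupport (pd3 v (pd3 w f)) := fun v w =>
    pd3_cs (pd3_cs hc w) v
  have hint : ∀ v w v' w' : ℝ × ℝ × ℝ,
      Integrable (fun p => pd3 v (pd3 w f) p * pd3 v' (pd3 w' f) p) := fun v w v' w' =>
    integrable_mul_cs (sm v w) (sm v' w') (cs v w)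
  set A := pd3 eX (pd3 eX f)
  set B := pd3 eY (pd3 eY f)
  set C := pd3 eZ (pd3 eZ f)
  have iAA : Integrable (fun p => A p * A p) := hint _ _ _ _
  have iBB : Integrable (fun p => B p * B p) := hint _ _ _ _
  have iCC : Integrable (fun p => C p * C p) := hint _ _ _ _
  have iAB : Integrable (fun p => A p * B p) := hint _ _ _ _
  have iAC : Integrable (fun p => A p * C p) := hint _ _ _ _
  have iBC : Integrable (fun p => B p * C p) := hint _ _ _ _
  have expand : (fun p => (lap3 f p) ^ 2) = fun p =>
      A p * A p + (B p * B p + (C p * C p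
        + (2 * (A p * B p) + (2 * (A p * C p) + 2 * (B p * C p))))) := by
    funext p; simp only [lap3, A, B, C]; ring
  rw [expand]
  have e1 : (∫ p, A p * A p + (B p * B p + (C p * C p + (2 * (A p * B p) + (2 * (A p * C p) + (2 * (B p * C p))))))) = (∫ p, A p * A p) + (∫ p, B p * B p + (C p * C p + (2 * (A p * B p) + (2 * (A p * C p) + (2 * (B p * C p)))))) :=
    integral_add (iAA) ((iBB).add ((iCC).add ((iAB.const_mul 2).add ((iAC.const_mul 2).add (iBC.const_mul 2)))))
  have e2 : (∫ p, B p * B p + (C p * C p + (2 * (A p * B p) + (2 * (A p * C p) + (2 * (B p * C p)))))) = (∫ p, B p * B p) + (∫ p, C p * C p + (2 * (A p * B p) + (2 * (A p * C p) + (2 * (B p * C p))))) :=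
    integral_add (iBB) ((iCC).add ((iAB.const_mul 2).add ((iAC.const_mul 2).add (iBC.const_mul 2))))
  have e3 : (∫ p, C p * C p + (2 * (A p * B p) + (2 * (A p * C p) + (2 * (B p * C p))))) = (∫ p, C p * C p) + (∫ p, 2 * (A p * B p) + (2 * (A p * C p) + (2 * (B p * C p)))) :=
    integral_add (iCC) ((iAB.const_mul 2).add ((iAC.const_mul 2).add (iBC.const_mul 2)))
  have e4 : (∫ p, 2 * (A p * B p) + (2 * (A p * C p) + (2 * (B p * C p)))) = (∫ p, 2 * (A p * B p)) + (∫ p, 2 * (A p * C p) + (2 * (B p * C p))) :=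
    integral_add (iAB.const_mul 2) ((iAC.const_mul 2).add (iBC.const_mul 2))
  have e5 : (∫ p, 2 * (A p * C p) + (2 * (B p * C p))) = (∫ p, 2 * (A p * C p)) + (∫ p, 2 * (B p * C p)) :=
    integral_add (iAC.const_mul 2) (iBC.const_mul 2)
  rw [e1, e2, e3, e4, e5, integral_const_mul, integral_const_mul, integral_const_mul]
  have hXY := int_sq_swap hf hc (Or.inl rfl) (Or.inr (Or.inl rfl))
  have hXZ := int_sq_swap hf hc (Or.inl rfl) (Or.inr (Or.inr rfl))
  have hYZ := int_sq_swap hf hc (Or.inr (Or.inl rfl)) (Or.inr (Or.inr rfl))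
  simp_rw [pow_two] at hXY hXZ hYZ ⊢
  rw [hXY, hXZ, hYZ]
  ring

lemma int_sq_le_lap (hf : ContDiff ℝ ∞ f) (hc : HasCompactSupport f)
    {a b : ℝ × ℝ × ℝ} (ha : IsCoord a) (hb : IsCoord b) :
    ∫ p, (pd3 a (pd3 b f) p) ^ 2 ≤ ∫ p, (lap3 f p) ^ 2 := by
  have key := int_sq_lap hf hc
  have nn : ∀ v w : ℝ × ℝ × ℝ, 0 ≤ ∫ p, (pd3 v (pd3 w f) p) ^ 2 := fun v w =>
    integral_nonneg fun p => sq_nonneg _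
  have comm : ∀ v w : ℝ × ℝ × ℝ,
      (∫ p, (pd3 v (pd3 w f) p) ^ 2) = ∫ p, (pd3 w (pd3 v f) p) ^ 2 := by
    intro v w; rw [pd3_comm hf]
  rcases ha with rfl | rfl | rfl <;> rcases hb with rfl | rfl | rfl <;>
    [skip; skip; skip; rw [comm]; skip; skip; rw [comm]; rw [comm]; skip] <;>
    nlinarith [nn eX eX, nn eY eY, nn eZ eZ, nn eX eY, nn eX eZ, nn eY eZ]

lemma int_add_sq {F G : ℝ × ℝ × ℝ → ℝ} (hF : Continuous F) (hFc : HasCompactSupport F)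
    (hG : Continuous G) (hGc : HasCompactSupport G) :
    ∫ p, (F p + G p) ^ 2 = (∫ p, F p ^ 2) + (∫ p, G p ^ 2) + 2 * ∫ p, F p * G p := by
  have iFF : Integrable (fun p => F p ^ 2) := by
    simpa [pow_two] using integrable_mul_cs hF hF hFc
  have iGG : Integrable (fun p => G p ^ 2) := by
    simpa [pow_two] using integrable_mul_cs hG hG hGc
  have iFG : Integrable (fun p => F p * G p) := integrable_mul_cs hF hG hFc
  have expand : (fun p => (F p + G p) ^ 2)
      = fun p => F p ^ 2 + (G p ^ 2 + 2 * (F p * G p)) := by funext p; ring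
  have e1 : (∫ p, F p ^ 2 + (G p ^ 2 + 2 * (F p * G p)))
      = (∫ p, F p ^ 2) + ∫ p, (G p ^ 2 + 2 * (F p * G p)) :=
    integral_add iFF (iGG.add (iFG.const_mul 2))
  have e2 : (∫ p, G p ^ 2 + 2 * (F p * G p))
      = (∫ p, G p ^ 2) + ∫ p, 2 * (F p * G p) :=
    integral_add iGG (iFG.const_mul 2)
  rw [expand, e1, e2, integral_const_mul]
  ring

lemma int_sq_neg_sub_le {F G : ℝ × ℝ × ℝ → ℝ} (hF : Continuous F) (hFc : HasCompactSupport F)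
    (hG : Continuous G) (hGc : HasCompactSupport G) :
    ∫ p, (-F p - G p) ^ 2 ≤ 2 * (∫ p, F p ^ 2) + 2 * ∫ p, G p ^ 2 := by
  have iFF : Integrable (fun p => F p ^ 2) := by
    simpa [pow_two] using integrable_mul_cs hF hF hFc
  have iGG : Integrable (fun p => G p ^ 2) := by
    simpa [pow_two] using integrable_mul_cs hG hG hGc
  have iL : Integrable (fun p => (-F p - G p) ^ 2) := by
    have : Continuous (fun p => -F p - G p) := (hF.neg).sub hG
    have hcs : HasCompactSupport (fun p => -F p - G p) := by
      have h2 : HasCompactSupport (fun p => F p + G p) := hFc.add hGc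
      have := h2.comp_left (g := Neg.neg) neg_zero
      simpa [Function.comp_def, sub_eq_add_neg, neg_add, add_comm] using this
    simpa [pow_two] using integrable_mul_cs this this hcs
  calc ∫ p, (-F p - G p) ^ 2 ≤ ∫ p, (2 * F p ^ 2 + 2 * G p ^ 2) := by
        apply integral_mono iL ((iFF.const_mul 2).add (iGG.const_mul 2))
        intro p; simp only [Pi.add_apply]; nlinarith [sq_nonneg (F p - G p), sq_nonneg (F p + G p)]
    _ = 2 * (∫ p, F p ^ 2) + 2 * ∫ p, G p ^ 2 := by
        have e : (∫ p, (2 * F p ^ 2 + 2 * G p ^ 2))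
            = (∫ p, 2 * F p ^ 2) + ∫ p, 2 * G p ^ 2 :=
          integral_add (iFF.const_mul 2) (iGG.const_mul 2)
        rw [e, integral_const_mul, integral_const_mul]

lemma eLp2 {F : ℝ × ℝ × ℝ → ℝ} (hF : Continuous F) (hFc : HasCompactSupport F) :
    eLpNorm F 2 volume = ENNReal.ofReal (Real.sqrt (∫ p, F p ^ 2)) := by
  have hm : MemLp F 2 volume := hF.memLp_of_hasCompactSupport hFc
  rw [hm.eLpNorm_eq_integral_rpow_norm two_ne_zero ENNReal.ofNat_ne_top]
  congr 1
  have h1 : ∀ p, ‖F p‖ ^ (ENNReal.toReal 2) = F p ^ 2 := by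
    intro p
    rw [ENNReal.toReal_ofNat, show ((2:ℝ)) = ((2:ℕ):ℝ) by norm_num, Real.rpow_natCast]
    simp [sq_abs, Real.norm_eq_abs]
  rw [funext h1, Real.sqrt_eq_rpow]
  simp [ENNReal.toReal_ofNat]

lemma pd3_neg_sub {g h : ℝ × ℝ × ℝ → ℝ} (hg : ContDiff ℝ ∞ g) (hh : ContDiff ℝ ∞ h)
    (v p : ℝ × ℝ × ℝ) :
    pd3 v (fun q => -g q - h q) p = -(pd3 v g p) - pd3 v h p := by
  simp only [pd3]
  rw [fderiv_fun_sub (f := fun q => -g q) ((hg.differentiable (by simp) p).neg) (hh.differentiable (by simp) p),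
    fderiv_fun_neg]
  simp

set_option maxHeartbeats 2000000 in
/-- For a smooth compactly supported divergence-free field `u` on `ℝ³`,
`‖(∂_x,∂_z)∂_x u‖_{L²} ≤ C (‖(∂_x²+∂_z²)u₃‖_{L²} + ‖Δu₂‖_{L²})` (case `k = 0`). -/
theorem stmt_2 :
    ∃ C : ℝ, 0 < C ∧
      ∀ u : (ℝ × ℝ × ℝ) → (Fin 3 → ℝ), ContDiff ℝ (⊤ : ℕ∞) u → HasCompactSupport u →
        (∀ p, pd3 eX (fun q => u q 0) p + pd3 eY (fun q => u q 1) p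
            + pd3 eZ (fun q => u q 2) p = 0) →
        eLpNorm (fun p => Real.sqrt (∑ i : Fin 3,
            ((pd3 eX (pd3 eX (fun q => u q i)) p) ^ 2
              + (pd3 eZ (pd3 eX (fun q => u q i)) p) ^ 2))) 2 volume ≤
          ENNReal.ofReal C *
            (eLpNorm (fun p => pd3 eX (pd3 eX (fun q => u q 2)) p
                + pd3 eZ (pd3 eZ (fun q => u q 2)) p) 2 volume
              + eLpNorm (lap3 (fun q => u q 1)) 2 volume) := by
  refine ⟨3, by norm_num, ?_⟩
  intro u hu hcs hdiv
  have hu' : ContDiff ℝ ∞ u := hu.of_le (by simp)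
  have hsi : ∀ i : Fin 3, ContDiff ℝ ∞ (fun q => u q i) := fun i => contDiff_pi.mp hu' i
  have hci : ∀ i : Fin 3, HasCompactSupport (fun q => u q i) :=
    fun i => hcs.comp_left (g := fun w : Fin 3 → ℝ => w i) rfl
  -- second partials: continuity, compact support, integrability of squares
  have sm2 : ∀ (a b : ℝ × ℝ × ℝ) (i : Fin 3),
      Continuous (pd3 a (pd3 b (fun q => u q i))) := fun a b i =>
    (pd3_smooth (pd3_smooth (hsi i) b) a).continuous
  have cs2 : ∀ (a b : ℝ × ℝ × ℝ) (i : Fin 3),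
      HasCompactSupport (pd3 a (pd3 b (fun q => u q i))) := fun a b i =>
    pd3_cs (pd3_cs (hci i) b) a
  have isq : ∀ (a b : ℝ × ℝ × ℝ) (i : Fin 3),
      Integrable (fun p => (pd3 a (pd3 b (fun q => u q i)) p) ^ 2) := fun a b i => by
    simpa [pow_two] using integrable_mul_cs (sm2 a b i) (sm2 a b i) (cs2 a b i)
  -- abbreviations (reals)
  set a0 := ∫ p, (pd3 eX (pd3 eX (fun q => u q 0)) p) ^ 2 with ha0def
  set b0 := ∫ p, (pd3 eZ (pd3 eX (fun q => u q 0)) p) ^ 2 with hb0def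
  set a1 := ∫ p, (pd3 eX (pd3 eX (fun q => u q 1)) p) ^ 2 with ha1def
  set b1 := ∫ p, (pd3 eZ (pd3 eX (fun q => u q 1)) p) ^ 2 with hb1def
  set a2 := ∫ p, (pd3 eX (pd3 eX (fun q => u q 2)) p) ^ 2 with ha2def
  set b2 := ∫ p, (pd3 eZ (pd3 eX (fun q => u q 2)) p) ^ 2 with hb2def
  set c2 := ∫ p, (pd3 eZ (pd3 eZ (fun q => u q 2)) p) ^ 2 with hc2def
  set m2 := ∫ p, pd3 eX (pd3 eX (fun q => u q 2)) p * pd3 eZ (pd3 eZ (fun q => u q 2)) p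
    with hm2def
  set l := ∫ p, (pd3 eX (pd3 eX (fun q => u q 2)) p + pd3 eZ (pd3 eZ (fun q => u q 2)) p) ^ 2
    with hldef
  set d := ∫ p, (lap3 (fun q => u q 1) p) ^ 2 with hddef
  -- basic positivity
  have ha2n : 0 ≤ a2 := integral_nonneg fun p => sq_nonneg _
  have hc2n : 0 ≤ c2 := integral_nonneg fun p => sq_nonneg _
  have hdn : 0 ≤ d := integral_nonneg fun p => sq_nonneg _
  have hln : 0 ≤ l := integral_nonneg fun p => sq_nonneg _
  -- swap identities
  have hb2 : b2 = ∫ p, pd3 eZ (pd3 eZ (fun q => u q 2)) p * pd3 eX (pd3 eX (fun q => u q 2)) p :=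
    int_sq_swap (hsi 2) (hci 2) (Or.inr (Or.inr rfl)) (Or.inl rfl)
  have hb2m : b2 = m2 := by
    rw [hb2, hm2def]; congr 1; funext p; rw [mul_comm]
  have hm2 : (∫ p, (pd3 eX (pd3 eZ (fun q => u q 2)) p) ^ 2) = m2 :=
    int_sq_swap (hsi 2) (hci 2) (Or.inl rfl) (Or.inr (Or.inr rfl))
  have hm2n : 0 ≤ m2 := hm2 ▸ integral_nonneg fun p => sq_nonneg _
  -- l expansion
  have hl : l = a2 + c2 + 2 * m2 :=
    int_add_sq (sm2 eX eX 2) (cs2 eX eX 2) (sm2 eZ eZ 2) (cs2 eZ eZ 2)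
  -- laplacian bounds for u₁
  have ha1 : a1 ≤ d := int_sq_le_lap (hsi 1) (hci 1) (Or.inl rfl) (Or.inl rfl)
  have hb1 : b1 ≤ d := int_sq_le_lap (hsi 1) (hci 1) (Or.inr (Or.inr rfl)) (Or.inl rfl)
  have hXY1 : (∫ p, (pd3 eX (pd3 eY (fun q => u q 1)) p) ^ 2) ≤ d :=
    int_sq_le_lap (hsi 1) (hci 1) (Or.inl rfl) (Or.inr (Or.inl rfl))
  have hZY1 : (∫ p, (pd3 eZ (pd3 eY (fun q => u q 1)) p) ^ 2) ≤ d :=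
    int_sq_le_lap (hsi 1) (hci 1) (Or.inr (Or.inr rfl)) (Or.inr (Or.inl rfl))
  -- divergence-free consequences
  have hdivfun : (pd3 eX (fun q => u q 0))
      = fun p => -(pd3 eY (fun q => u q 1) p) - pd3 eZ (fun q => u q 2) p :=
    funext fun p => by have := hdiv p; linarith
  have hA0 : ∀ v : ℝ × ℝ × ℝ, ∀ p, pd3 v (pd3 eX (fun q => u q 0)) p
      = -(pd3 v (pd3 eY (fun q => u q 1)) p) - pd3 v (pd3 eZ (fun q => u q 2)) p := by
    intro v p
    rw [hdivfun]
    exact pd3_neg_sub (pd3_smooth (hsi 1) eY) (pd3_smooth (hsi 2) eZ) v p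
  -- a0 bound
  have ha0eq : a0 = ∫ p, (-(pd3 eX (pd3 eY (fun q => u q 1)) p)
      - pd3 eX (pd3 eZ (fun q => u q 2)) p) ^ 2 := by
    rw [ha0def]
    congr 1; funext p
    have hc : pd3 eX (pd3 eX (fun q => u q 0)) = pd3 eX (pd3 eX (fun q => u q 0)) := rfl
    rw [show pd3 eX (pd3 eX (fun q => u q 0)) p
        = -(pd3 eX (pd3 eY (fun q => u q 1)) p) - pd3 eX (pd3 eZ (fun q => u q 2)) p
      from hA0 eX p]
  have ha0 : a0 ≤ 2 * d + 2 * m2 := by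
    rw [ha0eq]
    calc ∫ p, (-(pd3 eX (pd3 eY (fun q => u q 1)) p)
          - pd3 eX (pd3 eZ (fun q => u q 2)) p) ^ 2
        ≤ 2 * (∫ p, (pd3 eX (pd3 eY (fun q => u q 1)) p) ^ 2)
          + 2 * ∫ p, (pd3 eX (pd3 eZ (fun q => u q 2)) p) ^ 2 :=
          int_sq_neg_sub_le (sm2 eX eY 1) (cs2 eX eY 1) (sm2 eX eZ 2) (cs2 eX eZ 2)
      _ ≤ 2 * d + 2 * m2 := by rw [hm2]; linarith
  -- b0 bound
  have hb0eq : b0 = ∫ p, (-(pd3 eZ (pd3 eY (fun q => u q 1)) p)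
      - pd3 eZ (pd3 eZ (fun q => u q 2)) p) ^ 2 := by
    rw [hb0def]
    congr 1; funext p
    rw [show pd3 eZ (pd3 eX (fun q => u q 0)) p
        = -(pd3 eZ (pd3 eY (fun q => u q 1)) p) - pd3 eZ (pd3 eZ (fun q => u q 2)) p
      from hA0 eZ p]
  have hb0 : b0 ≤ 2 * d + 2 * c2 := by
    rw [hb0eq]
    calc ∫ p, (-(pd3 eZ (pd3 eY (fun q => u q 1)) p)
          - pd3 eZ (pd3 eZ (fun q => u q 2)) p) ^ 2
        ≤ 2 * (∫ p, (pd3 eZ (pd3 eY (fun q => u q 1)) p) ^ 2)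
          + 2 * ∫ p, (pd3 eZ (pd3 eZ (fun q => u q 2)) p) ^ 2 :=
          int_sq_neg_sub_le (sm2 eZ eY 1) (cs2 eZ eY 1) (sm2 eZ eZ 2) (cs2 eZ eZ 2)
      _ ≤ 2 * d + 2 * c2 := by linarith
  -- total bound
  have hT : a0 + b0 + (a1 + b1) + (a2 + b2) ≤ 9 * (l + d) := by
    rw [hb2m]
    nlinarith [hm2n, hc2n, ha2n, hdn, hln, hl, ha0, hb0, ha1, hb1]
  -- the LHS squared integrand
  set Φ : ℝ × ℝ × ℝ → ℝ := fun p => Real.sqrt (∑ i : Fin 3,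
      ((pd3 eX (pd3 eX (fun q => u q i)) p) ^ 2
        + (pd3 eZ (pd3 eX (fun q => u q i)) p) ^ 2)) with hΦdef
  have hsum_cont : Continuous (fun p => ∑ i : Fin 3,
      ((pd3 eX (pd3 eX (fun q => u q i)) p) ^ 2
        + (pd3 eZ (pd3 eX (fun q => u q i)) p) ^ 2)) := by
    apply continuous_finset_sum
    intro i _
    exact ((sm2 eX eX i).pow 2).add ((sm2 eZ eX i).pow 2)
  have hsum_cs : HasCompactSupport (fun p => ∑ i : Fin 3,
      ((pd3 eX (pd3 eX (fun q => u q i)) p) ^ 2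
        + (pd3 eZ (pd3 eX (fun q => u q i)) p) ^ 2)) := by
    simp only [Fin.sum_univ_three]
    have h : ∀ (a b : ℝ × ℝ × ℝ) (i : Fin 3),
        HasCompactSupport (fun p => (pd3 a (pd3 b (fun q => u q i)) p) ^ 2) := by
      intro a b i
      have := (cs2 a b i).mul_left (f := pd3 a (pd3 b (fun q => u q i)))
      exact (cs2 a b i).comp_left (g := fun x : ℝ => x ^ 2) (by norm_num)
    exact ((((h eX eX 0).add (h eZ eX 0)).add ((h eX eX 1).add (h eZ eX 1))).add
      ((h eX eX 2).add (h eZ eX 2)))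
  have hΦcont : Continuous Φ := Real.continuous_sqrt.comp hsum_cont
  have hΦcs : HasCompactSupport Φ := by
    have := hsum_cs.comp_left (g := Real.sqrt) Real.sqrt_zero
    simpa [hΦdef, Function.comp_def] using this
  have hΦsq : ∀ p, Φ p ^ 2 = ∑ i : Fin 3,
      ((pd3 eX (pd3 eX (fun q => u q i)) p) ^ 2
        + (pd3 eZ (pd3 eX (fun q => u q i)) p) ^ 2) := by
    intro p
    apply Real.sq_sqrt
    positivity
  -- split ∫ Φ² into six pieces
  have hsplit : (∫ p, Φ p ^ 2) = a0 + b0 + (a1 + b1) + (a2 + b2) := by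
    have hre : (fun p => Φ p ^ 2) = fun p =>
        ((pd3 eX (pd3 eX (fun q => u q 0)) p) ^ 2 + (pd3 eZ (pd3 eX (fun q => u q 0)) p) ^ 2)
        + (((pd3 eX (pd3 eX (fun q => u q 1)) p) ^ 2 + (pd3 eZ (pd3 eX (fun q => u q 1)) p) ^ 2)
        + (((pd3 eX (pd3 eX (fun q => u q 2)) p) ^ 2
            + (pd3 eZ (pd3 eX (fun q => u q 2)) p) ^ 2))) := by
      funext p
      rw [hΦsq p, Fin.sum_univ_three]
      ring
    have iP : ∀ i : Fin 3, Integrable (fun p =>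
        (pd3 eX (pd3 eX (fun q => u q i)) p) ^ 2
          + (pd3 eZ (pd3 eX (fun q => u q i)) p) ^ 2) := fun i =>
      (isq eX eX i).add (isq eZ eX i)
    have e1 : (∫ p, ((pd3 eX (pd3 eX (fun q => u q 0)) p) ^ 2
          + (pd3 eZ (pd3 eX (fun q => u q 0)) p) ^ 2)
        + (((pd3 eX (pd3 eX (fun q => u q 1)) p) ^ 2
          + (pd3 eZ (pd3 eX (fun q => u q 1)) p) ^ 2)
        + (((pd3 eX (pd3 eX (fun q => u q 2)) p) ^ 2
          + (pd3 eZ (pd3 eX (fun q => u q 2)) p) ^ 2))))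
        = (∫ p, ((pd3 eX (pd3 eX (fun q => u q 0)) p) ^ 2
          + (pd3 eZ (pd3 eX (fun q => u q 0)) p) ^ 2))
        + ∫ p, (((pd3 eX (pd3 eX (fun q => u q 1)) p) ^ 2
          + (pd3 eZ (pd3 eX (fun q => u q 1)) p) ^ 2)
        + (((pd3 eX (pd3 eX (fun q => u q 2)) p) ^ 2
          + (pd3 eZ (pd3 eX (fun q => u q 2)) p) ^ 2))) :=
      integral_add (iP 0) ((iP 1).add (iP 2))
    have e2 : (∫ p, (((pd3 eX (pd3 eX (fun q => u q 1)) p) ^ 2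
          + (pd3 eZ (pd3 eX (fun q => u q 1)) p) ^ 2)
        + (((pd3 eX (pd3 eX (fun q => u q 2)) p) ^ 2
          + (pd3 eZ (pd3 eX (fun q => u q 2)) p) ^ 2))))
        = (∫ p, ((pd3 eX (pd3 eX (fun q => u q 1)) p) ^ 2
          + (pd3 eZ (pd3 eX (fun q => u q 1)) p) ^ 2))
        + ∫ p, ((pd3 eX (pd3 eX (fun q => u q 2)) p) ^ 2
          + (pd3 eZ (pd3 eX (fun q => u q 2)) p) ^ 2) :=
      integral_add (iP 1) (iP 2)
    have e3 : ∀ i : Fin 3, (∫ p, ((pd3 eX (pd3 eX (fun q => u q i)) p) ^ 2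
          + (pd3 eZ (pd3 eX (fun q => u q i)) p) ^ 2))
        = (∫ p, (pd3 eX (pd3 eX (fun q => u q i)) p) ^ 2)
          + ∫ p, (pd3 eZ (pd3 eX (fun q => u q i)) p) ^ 2 := fun i =>
      integral_add (isq eX eX i) (isq eZ eX i)
    rw [hre, e1, e2, e3 0, e3 1, e3 2]
    ring
  -- eLpNorm conversions
  have hLcont : Continuous (fun p => pd3 eX (pd3 eX (fun q => u q 2)) p
      + pd3 eZ (pd3 eZ (fun q => u q 2)) p) := (sm2 eX eX 2).add (sm2 eZ eZ 2)
  have hLcs : HasCompactSupport (fun p => pd3 eX (pd3 eX (fun q => u q 2)) p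
      + pd3 eZ (pd3 eZ (fun q => u q 2)) p) := (cs2 eX eX 2).add (cs2 eZ eZ 2)
  have hDcont : Continuous (lap3 (fun q => u q 1)) := by
    have : lap3 (fun q => u q 1) = fun p => pd3 eX (pd3 eX (fun q => u q 1)) p
        + pd3 eY (pd3 eY (fun q => u q 1)) p + pd3 eZ (pd3 eZ (fun q => u q 1)) p := rfl
    rw [this]
    exact ((sm2 eX eX 1).add (sm2 eY eY 1)).add (sm2 eZ eZ 1)
  have hDcs : HasCompactSupport (lap3 (fun q => u q 1)) := by
    have : lap3 (fun q => u q 1) = fun p => pd3 eX (pd3 eX (fun q => u q 1)) p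
        + pd3 eY (pd3 eY (fun q => u q 1)) p + pd3 eZ (pd3 eZ (fun q => u q 1)) p := rfl
    rw [this]
    exact ((cs2 eX eX 1).add (cs2 eY eY 1)).add (cs2 eZ eZ 1)
  rw [eLp2 hΦcont hΦcs, eLp2 hLcont hLcs, eLp2 hDcont hDcs, hsplit]
  rw [← hldef, ← hddef]
  -- final real inequality
  have hsq : Real.sqrt (a0 + b0 + (a1 + b1) + (a2 + b2))
      ≤ 3 * (Real.sqrt l + Real.sqrt d) := by
    have h1 : Real.sqrt (a0 + b0 + (a1 + b1) + (a2 + b2)) ≤ Real.sqrt (9 * (l + d)) :=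
      Real.sqrt_le_sqrt hT
    have h2 : Real.sqrt (9 * (l + d)) = 3 * Real.sqrt (l + d) := by
      rw [Real.sqrt_mul (by norm_num : (0:ℝ) ≤ 9)]
      rw [show (9:ℝ) = 3 ^ 2 by norm_num, Real.sqrt_sq (by norm_num : (0:ℝ) ≤ 3)]
    have h3 : Real.sqrt (l + d) ≤ Real.sqrt l + Real.sqrt d := by
      have h4 : l + d ≤ (Real.sqrt l + Real.sqrt d) ^ 2 := by
        nlinarith [Real.sq_sqrt hln, Real.sq_sqrt hdn, Real.sqrt_nonneg l, Real.sqrt_nonneg d,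
          mul_nonneg (Real.sqrt_nonneg l) (Real.sqrt_nonneg d)]
      have h5 := Real.sqrt_le_sqrt h4
      rwa [Real.sqrt_sq (by positivity)] at h5
    calc Real.sqrt (a0 + b0 + (a1 + b1) + (a2 + b2)) ≤ 3 * Real.sqrt (l + d) := by
          rw [← h2]; exact h1
      _ ≤ 3 * (Real.sqrt l + Real.sqrt d) := by linarith
  calc ENNReal.ofReal (Real.sqrt (a0 + b0 + (a1 + b1) + (a2 + b2)))
      ≤ ENNReal.ofReal (3 * (Real.sqrt l + Real.sqrt d)) := ENNReal.ofReal_le_ofReal hsq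
    _ = ENNReal.ofReal 3 * (ENNReal.ofReal (Real.sqrt l) + ENNReal.ofReal (Real.sqrt d)) := by
        rw [ENNReal.ofReal_mul (by norm_num : (0:ℝ) ≤ 3),
          ENNReal.ofReal_add (Real.sqrt_nonneg l) (Real.sqrt_nonneg d)]
end

section
/- Suppose nonnegative reals E₁,…,E₆ and ε₀, ν ∈ (0,1), C ≥ 1 satisfy the bootstrap bounds E₁ ≤ ε₀, E₂ ≤ ε₀ν, E₃ ≤ ε₀ν², E₄ ≤ ε₀ν, E₅ ≤ ε₀ν², E₆ ≤ ε₀ν, together with the closed system: E₃ ≤ C(θ + ν⁻¹E₂E₃ + ν⁻¹E₄E₅), E₅ ≤ C(θ + ν^{-2/3}E₃E₆ + ν⁻¹E₃E₄), E₂ ≤ C(η + ν⁻¹E₄² + ν⁻¹E₃), E₄ ≤ C(η + ν⁻¹E₄² + ν⁻¹E₅), E₆ ≤ C(η + ν⁻¹E₄² + ν⁻¹E₅), E₁ ≤ C(ν^{-2/3}η + ν⁻¹E₂ + ν⁻²E₄²), where η = εν and θ = εν². Then if ε₀ is sufficiently small (depending only on C) and ε ≤ ε₀/(2C') for a suitable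 constant C' depending on C, all the strict improvements E₁ ≤ ε₀/2, E₂ ≤ (ε₀/2)ν, E₃ ≤ (ε₀/2)ν², E₄ ≤ (ε₀/2)ν, E₅ ≤ (ε₀/2)ν², E₆ ≤ (ε₀/2)ν hold. -/
set_option maxHeartbeats 1000000 in
/-- The bootstrap argument closing the proof of Theorem 1.1: given the closed system of
inequalities among the energies `E₁,…,E₆` with data sizes `η = εν`, `θ = εν²`, if `ε₀` is
small enough (depending only on `C`) and `ε ≤ ε₀/(2C')`, all halved bounds hold. -/
theorem stmt_7 (C : ℝ) (hC : 1 ≤ C) :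
    ∃ ε₀max C' : ℝ, 0 < ε₀max ∧ 0 < C' ∧
      ∀ ε₀ ε ν E₁ E₂ E₃ E₄ E₅ E₆ : ℝ,
        0 < ν → ν < 1 → 0 < ε₀ → ε₀ ≤ ε₀max → 0 ≤ ε →
        0 ≤ E₁ → 0 ≤ E₂ → 0 ≤ E₃ → 0 ≤ E₄ → 0 ≤ E₅ → 0 ≤ E₆ →
        E₁ ≤ ε₀ → E₂ ≤ ε₀ * ν → E₃ ≤ ε₀ * ν ^ 2 → E₄ ≤ ε₀ * ν →
        E₅ ≤ ε₀ * ν ^ 2 → E₆ ≤ ε₀ * ν →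
        E₃ ≤ C * (ε * ν ^ 2 + ν⁻¹ * E₂ * E₃ + ν⁻¹ * E₄ * E₅) →
        E₅ ≤ C * (ε * ν ^ 2 + ν ^ (-(2 : ℝ)/3) * E₃ * E₆ + ν⁻¹ * E₃ * E₄) →
        E₂ ≤ C * (ε * ν + ν⁻¹ * E₄ ^ 2 + ν⁻¹ * E₃) →
        E₄ ≤ C * (ε * ν + ν⁻¹ * E₄ ^ 2 + ν⁻¹ * E₅) →
        E₆ ≤ C * (ε * ν + ν⁻¹ * E₄ ^ 2 + ν⁻¹ * E₅) →
        E₁ ≤ C * (ν ^ (-(2 : ℝ)/3) * (ε * ν) + ν⁻¹ * E₂ + (ν ^ 2)⁻¹ * E₄ ^ 2) →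
        ε ≤ ε₀ / (2 * C') →
        E₁ ≤ ε₀ / 2 ∧ E₂ ≤ (ε₀ / 2) * ν ∧ E₃ ≤ (ε₀ / 2) * ν ^ 2 ∧
          E₄ ≤ (ε₀ / 2) * ν ∧ E₅ ≤ (ε₀ / 2) * ν ^ 2 ∧ E₆ ≤ (ε₀ / 2) * ν := by
  have hC0 : (0:ℝ) < C := by linarith
  refine ⟨1/(1000*C^4), 1000*C^4, by positivity, by positivity, ?_⟩
  intro ε₀ ε ν E₁ E₂ E₃ E₄ E₅ E₆ hν hν1 hε₀ hmax hε hE₁ hE₂ hE₃ hE₄ hE₅ hE₆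
    b1 b2 b3 b4 b5 b6 h3 h5 h2 h4 h6 h1 hεC
  have hpos : (0:ℝ) < 1000*C^4 := by positivity
  -- basic scalar facts
  have f1 : ε₀ * (1000*C^4) ≤ 1 := (le_div_iff₀ hpos).mp hmax
  have f2 : ε * (2*(1000*C^4)) ≤ ε₀ := (le_div_iff₀ (by positivity)).mp hεC
  have hC1 : C ≤ C^4 := le_self_pow₀ (by linarith) (by norm_num)
  have hC2 : C^2 ≤ C^4 := pow_le_pow_right₀ hC (by norm_num)
  have hC3 : C^3 ≤ C^4 := pow_le_pow_right₀ hC (by norm_num)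
  have hC41 : (1:ℝ) ≤ C^4 := by calc (1:ℝ) = C^0 := (pow_zero C).symm
    _ ≤ C^4 := pow_le_pow_right₀ hC (by norm_num)
  have d4 : C^4*ε ≤ ε₀/2000 := by linarith only [f2]
  have d1 : C*ε ≤ ε₀/2000 := by linarith only [d4, mul_le_mul_of_nonneg_right hC1 hε]
  have d2 : C^2*ε ≤ ε₀/2000 := by linarith only [d4, mul_le_mul_of_nonneg_right hC2 hε]
  have d3 : C^3*ε ≤ ε₀/2000 := by linarith only [d4, mul_le_mul_of_nonneg_right hC3 hε]
  have r4 : C^4*ε₀ ≤ 1/1000 := by linarith only [f1]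
  have r1 : C*ε₀ ≤ 1/1000 := by linarith only [r4, mul_le_mul_of_nonneg_right hC1 hε₀.le]
  have r2 : C^2*ε₀ ≤ 1/1000 := by linarith only [r4, mul_le_mul_of_nonneg_right hC2 hε₀.le]
  have r3 : C^3*ε₀ ≤ 1/1000 := by linarith only [r4, mul_le_mul_of_nonneg_right hC3 hε₀.le]
  have e01 : ε₀ ≤ 1 := by linarith only [r4, mul_le_mul_of_nonneg_right hC41 hε₀.le]
  have m2 : ε₀^2 ≤ ε₀ := by linarith only [mul_le_mul_of_nonneg_right e01 hε₀.le]
  have m3 : ε₀^3 ≤ ε₀ := by linarith only [mul_le_mul_of_nonneg_right m2 hε₀.le, m2]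
  have c1 : C*ε₀^2 ≤ ε₀/1000 := by linarith only [mul_le_mul_of_nonneg_right r1 hε₀.le, hε₀.le]
  have c2 : C^2*ε₀^2 ≤ ε₀/1000 := by linarith only [mul_le_mul_of_nonneg_right r2 hε₀.le, hε₀.le]
  have c3 : C^3*ε₀^2 ≤ ε₀/1000 := by linarith only [mul_le_mul_of_nonneg_right r3 hε₀.le, hε₀.le]
  have ca : C^2*ε₀^3 ≤ ε₀/1000 := by
    linarith only [mul_le_mul_of_nonneg_right r2 (sq_nonneg ε₀), m2]
  have cb : C^3*ε₀^3 ≤ ε₀/1000 := by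
    linarith only [mul_le_mul_of_nonneg_right r3 (sq_nonneg ε₀), m2]
  have cc : C^4*ε₀^4 ≤ ε₀/1000 := by
    linarith only [mul_le_mul_of_nonneg_right r4 (pow_nonneg hε₀.le 3), m3]
  have g2 : C^2*ε*ε₀ ≤ ε₀/2000 := by
    linarith only [mul_le_mul_of_nonneg_right d2 hε₀.le, m2]
  have g3 : C^3*ε*ε₀ ≤ ε₀/2000 := by
    linarith only [mul_le_mul_of_nonneg_right d3 hε₀.le, m2]
  have g4 : C^4*ε*ε₀^2 ≤ ε₀/2000 := by
    linarith only [mul_le_mul_of_nonneg_right d4 (sq_nonneg ε₀), m3, m2]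
  -- inverse facts
  have w2 : ν⁻¹ * E₂ ≤ ε₀ := by rw [inv_mul_le_iff₀ hν]; linarith only [b2]
  have w4 : ν⁻¹ * E₄ ≤ ε₀ := by rw [inv_mul_le_iff₀ hν]; linarith only [b4]
  -- rpow facts
  have hp3 : ν ^ (-(2:ℝ)/3) * ν^3 ≤ ν^2 := by
    have e1 : ν ^ (-(2:ℝ)/3) * ν^3 = ν ^ ((7:ℝ)/3) := by
      rw [← Real.rpow_natCast ν 3, ← Real.rpow_add hν]; norm_num
    have e3 : ν ^ ((2:ℝ)) = ν^2 := by
      rw [show ((2:ℝ)) = ((2:ℕ):ℝ) by norm_num, Real.rpow_natCast]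
    rw [e1, ← e3]
    exact Real.rpow_le_rpow_of_exponent_ge hν hν1.le (by norm_num)
  have hp1 : ν ^ (-(2:ℝ)/3) * ν ≤ 1 := by
    have e1 : ν ^ (-(2:ℝ)/3) * ν = ν ^ ((1:ℝ)/3) := by
      nth_rewrite 2 [← Real.rpow_one ν]
      rw [← Real.rpow_add hν]; norm_num
    rw [e1]
    exact Real.rpow_le_one hν.le hν1.le (by norm_num)
  have hrp : (0:ℝ) ≤ ν ^ (-(2:ℝ)/3) := (Real.rpow_pos_of_pos hν _).le
  -- Step A3
  have A3 : E₃ ≤ (2*C*ε + 2*C*ε₀^2) * ν^2 := by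
    have u1 : ν⁻¹ * E₂ * E₃ ≤ ε₀ * E₃ := mul_le_mul_of_nonneg_right w2 hE₃
    have u2 : ν⁻¹ * E₄ * E₅ ≤ ε₀ * (ε₀ * ν^2) :=
      le_trans (mul_le_mul_of_nonneg_right w4 hE₅) (mul_le_mul_of_nonneg_left b5 hε₀.le)
    have u0 : E₃ ≤ C * (ε*ν^2 + ε₀*E₃ + ε₀*(ε₀*ν^2)) :=
      le_trans h3 (mul_le_mul_of_nonneg_left (by linarith only [u1, u2]) hC0.le)
    linarith only [u0, mul_le_mul_of_nonneg_right r1 hE₃,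
      mul_nonneg (mul_nonneg hC0.le hε) (sq_nonneg ν),
      mul_nonneg (mul_nonneg hC0.le (mul_nonneg hε₀.le hε₀.le)) (sq_nonneg ν)]
  have hK3 : (0:ℝ) ≤ 2*C*ε + 2*C*ε₀^2 := by positivity
  -- Step A5
  have u3 : ν ^ (-(2:ℝ)/3) * E₃ * E₆ ≤ ((2*C*ε + 2*C*ε₀^2) * ε₀) * ν^2 := by
    have m1 : E₃ * E₆ ≤ ((2*C*ε + 2*C*ε₀^2) * ν^2) * (ε₀ * ν) :=
      mul_le_mul A3 b6 hE₆ (by positivity)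
    calc ν ^ (-(2:ℝ)/3) * E₃ * E₆ = ν ^ (-(2:ℝ)/3) * (E₃ * E₆) := by ring
      _ ≤ ν ^ (-(2:ℝ)/3) * (((2*C*ε + 2*C*ε₀^2) * ν^2) * (ε₀ * ν)) :=
          mul_le_mul_of_nonneg_left m1 hrp
      _ = ((2*C*ε + 2*C*ε₀^2) * ε₀) * (ν ^ (-(2:ℝ)/3) * ν^3) := by ring
      _ ≤ ((2*C*ε + 2*C*ε₀^2) * ε₀) * ν^2 :=
          mul_le_mul_of_nonneg_left hp3 (by positivity)
  have w3' : ν⁻¹ * E₃ ≤ (2*C*ε + 2*C*ε₀^2) * ν := by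
    rw [inv_mul_le_iff₀ hν]; linarith only [A3]
  have u4 : ν⁻¹ * E₃ * E₄ ≤ ((2*C*ε + 2*C*ε₀^2) * ε₀) * ν^2 := by
    calc ν⁻¹*E₃*E₄ ≤ ((2*C*ε+2*C*ε₀^2)*ν) * (ε₀*ν) := mul_le_mul w3' b4 hE₄ (by positivity)
      _ = ((2*C*ε+2*C*ε₀^2)*ε₀)*ν^2 := by ring
  have A5 : E₅ ≤ (C*ε + 2*C*((2*C*ε + 2*C*ε₀^2)*ε₀)) * ν^2 := by
    calc E₅ ≤ C * (ε*ν^2 + ν^(-(2:ℝ)/3)*E₃*E₆ + ν⁻¹*E₃*E₄) := h5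
      _ ≤ C * (ε*ν^2 + ((2*C*ε+2*C*ε₀^2)*ε₀)*ν^2 + ((2*C*ε+2*C*ε₀^2)*ε₀)*ν^2) :=
          mul_le_mul_of_nonneg_left (by linarith only [u3, u4]) hC0.le
      _ = (C*ε + 2*C*((2*C*ε + 2*C*ε₀^2)*ε₀)) * ν^2 := by ring
  have hK5 : (0:ℝ) ≤ C*ε + 2*C*((2*C*ε + 2*C*ε₀^2)*ε₀) := by positivity
  -- common pieces
  have uu4 : ν⁻¹ * E₄^2 ≤ ε₀ * E₄ := by
    calc ν⁻¹*E₄^2 = (ν⁻¹*E₄)*E₄ := by ring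
      _ ≤ ε₀*E₄ := mul_le_mul_of_nonneg_right w4 hE₄
  have uu4' : ν⁻¹ * E₄^2 ≤ ε₀^2 * ν := by
    linarith only [uu4, mul_le_mul_of_nonneg_left b4 hε₀.le]
  have w5' : ν⁻¹ * E₅ ≤ (C*ε + 2*C*((2*C*ε + 2*C*ε₀^2)*ε₀)) * ν := by
    rw [inv_mul_le_iff₀ hν]; linarith only [A5]
  -- Step A4
  have A4 : E₄ ≤ (2*C*ε + 2*C*(C*ε + 2*C*((2*C*ε + 2*C*ε₀^2)*ε₀))) * ν := by
    have step : E₄ ≤ C*(ε*ν + ε₀*E₄ + (C*ε + 2*C*((2*C*ε + 2*C*ε₀^2)*ε₀))*ν) :=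
      le_trans h4 (mul_le_mul_of_nonneg_left (by linarith only [uu4, w5']) hC0.le)
    linarith only [step, mul_le_mul_of_nonneg_right r1 hE₄,
      mul_nonneg (mul_nonneg hC0.le hε) hν.le,
      mul_nonneg (mul_nonneg hC0.le hK5) hν.le]
  have hK4 : (0:ℝ) ≤ 2*C*ε + 2*C*(C*ε + 2*C*((2*C*ε + 2*C*ε₀^2)*ε₀)) := by positivity
  -- Step A2
  have A2 : E₂ ≤ (C*ε + C*ε₀^2 + C*(2*C*ε + 2*C*ε₀^2)) * ν := by
    calc E₂ ≤ C * (ε*ν + ν⁻¹*E₄^2 + ν⁻¹*E₃) := h2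
      _ ≤ C * (ε*ν + ε₀^2*ν + (2*C*ε + 2*C*ε₀^2)*ν) :=
          mul_le_mul_of_nonneg_left (by linarith only [uu4', w3']) hC0.le
      _ = (C*ε + C*ε₀^2 + C*(2*C*ε + 2*C*ε₀^2)) * ν := by ring
  -- Step A6
  have A6 : E₆ ≤ (C*ε + C*ε₀^2 + C*(C*ε + 2*C*((2*C*ε + 2*C*ε₀^2)*ε₀))) * ν := by
    calc E₆ ≤ C * (ε*ν + ν⁻¹*E₄^2 + ν⁻¹*E₅) := h6
      _ ≤ C * (ε*ν + ε₀^2*ν + (C*ε + 2*C*((2*C*ε + 2*C*ε₀^2)*ε₀))*ν) :=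
          mul_le_mul_of_nonneg_left (by linarith only [uu4', w5']) hC0.le
      _ = (C*ε + C*ε₀^2 + C*(C*ε + 2*C*((2*C*ε + 2*C*ε₀^2)*ε₀))) * ν := by ring
  -- Step A1
  have ta : ν ^ (-(2:ℝ)/3) * (ε*ν) ≤ ε := by
    calc ν ^ (-(2:ℝ)/3) * (ε*ν) = ε * (ν ^ (-(2:ℝ)/3) * ν) := by ring
      _ ≤ ε * 1 := mul_le_mul_of_nonneg_left hp1 hε
      _ = ε := by ring
  have tb : ν⁻¹ * E₂ ≤ C*ε + C*ε₀^2 + C*(2*C*ε + 2*C*ε₀^2) := by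
    rw [inv_mul_le_iff₀ hν]; linarith only [A2]
  have tc : (ν^2)⁻¹ * E₄^2 ≤ ε₀ * (2*C*ε + 2*C*(C*ε + 2*C*((2*C*ε + 2*C*ε₀^2)*ε₀))) := by
    have msq : E₄^2 ≤ (ε₀*ν)*((2*C*ε + 2*C*(C*ε + 2*C*((2*C*ε + 2*C*ε₀^2)*ε₀)))*ν) := by
      calc E₄^2 = E₄ * E₄ := sq E₄ ▸ rfl
        _ ≤ (ε₀*ν)*((2*C*ε + 2*C*(C*ε + 2*C*((2*C*ε + 2*C*ε₀^2)*ε₀)))*ν) :=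
            mul_le_mul b4 A4 hE₄ (by positivity)
    rw [inv_mul_le_iff₀ (by positivity : (0:ℝ) < ν^2)]
    linarith only [msq]
  have A1 : E₁ ≤ C*ε + C*(C*ε + C*ε₀^2 + C*(2*C*ε + 2*C*ε₀^2))
      + C*(ε₀ * (2*C*ε + 2*C*(C*ε + 2*C*((2*C*ε + 2*C*ε₀^2)*ε₀)))) := by
    calc E₁ ≤ C * (ν ^ (-(2:ℝ)/3) * (ε*ν) + ν⁻¹*E₂ + (ν^2)⁻¹*E₄^2) := h1
      _ ≤ C * (ε + (C*ε + C*ε₀^2 + C*(2*C*ε + 2*C*ε₀^2))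
            + ε₀ * (2*C*ε + 2*C*(C*ε + 2*C*((2*C*ε + 2*C*ε₀^2)*ε₀)))) :=
          mul_le_mul_of_nonneg_left (by linarith only [ta, tb, tc]) hC0.le
      _ = _ := by ring
  -- scalar bounds
  have S3 : 2*C*ε + 2*C*ε₀^2 ≤ ε₀/2 := by linarith only [d1, c1, hε₀.le]
  have S5 : C*ε + 2*C*((2*C*ε + 2*C*ε₀^2)*ε₀) ≤ ε₀/2 := by linarith only [d1, g2, ca, hε₀.le]
  have S4 : 2*C*ε + 2*C*(C*ε + 2*C*((2*C*ε + 2*C*ε₀^2)*ε₀)) ≤ ε₀/2 := by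
    linarith only [d1, d2, g3, cb, hε₀.le]
  have S2 : C*ε + C*ε₀^2 + C*(2*C*ε + 2*C*ε₀^2) ≤ ε₀/2 := by linarith only [d1, c1, d2, c2, hε₀.le]
  have S6 : C*ε + C*ε₀^2 + C*(C*ε + 2*C*((2*C*ε + 2*C*ε₀^2)*ε₀)) ≤ ε₀/2 := by
    linarith only [d1, c1, d2, g3, cb, hε₀.le]
  have S1 : C*ε + C*(C*ε + C*ε₀^2 + C*(2*C*ε + 2*C*ε₀^2))
      + C*(ε₀ * (2*C*ε + 2*C*(C*ε + 2*C*((2*C*ε + 2*C*ε₀^2)*ε₀)))) ≤ ε₀/2 := by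
    linarith only [d1, d2, c2, d3, c3, g2, g3, g4, cc, hε₀.le]
  refine ⟨by linarith only [A1, S1], ?_, ?_, ?_, ?_, ?_⟩
  · linarith only [A2, mul_le_mul_of_nonneg_right S2 hν.le]
  · linarith only [A3, mul_le_mul_of_nonneg_right S3 (sq_nonneg ν)]
  · linarith only [A4, mul_le_mul_of_nonneg_right S4 hν.le]
  · linarith only [A5, mul_le_mul_of_nonneg_right S5 (sq_nonneg ν)]
  · linarith only [A6, mul_le_mul_of_nonneg_right S6 hν.le]
end
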